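/- arXiv:2602.22230 — 2 statements merged into one kernel-verified Lean document; each statement's English description precedes it below -/
import Mathlib

section
/- Partition reduction, completeness: given numbers a_1,...,a_n with Σ a_i = 2B that can be partitioned into two sets each summing to B, the constructed two-chain instance (each chain containing one operator of capacity B and the applications of one partition class, with all gas prices equal to 1) achieves total system utility Σ_c gasprice_c · Gas_c = 2B. -/
/-- Partition reduction, completeness: if `a_1,...,a_n` with
`Σ a_i = 2B` can be partitioned into two sets each summing to `B`, then the
constructed two-chain instance (each chain one operator of capacity `B` and
the applications of one class, all prices `1`) achieves total system utility
`Σ_c gasprice_c · Gas_c = 2B`. -/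
theorem stmt16 {n : ℕ} (a : Fin n → ℝ) (B : ℝ)
    (ha : ∀ i, 0 < a i) (hsum : ∑ i, a i = 2 * B)
    (S : Finset (Fin n)) (hS : ∑ i ∈ S, a i = B) :
    1 * min (∑ i ∈ S, a i) B + 1 * min (∑ i ∈ Sᶜ, a i) B = 2 * B := by
  have hSc : ∑ i ∈ Sᶜ, a i = B := by
    have := Finset.sum_add_sum_compl S a
    rw [hsum, hS] at this; linarith
  rw [hS, hSc, min_self]; ring
end

section
/- Partition reduction, soundness: in the two-operator instance of the reduction (all prices 1, operator capacities B, application demands a_1,...,a_n with Σ a_i = 2B), any feasible assignment with system utility ≥ 2B must place the two operators on different chains with each chain's application demand exactly B; hence the a_i admit a partition into two sets each summing to B. -/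
open Finset

/-- Demand of chain `c`: total declared gas of applications assigned to `c`. -/
noncomputable def chainDemand {C : Type*} [DecidableEq C] {n : ℕ}
    (a : Fin n → ℝ) (appChain : Fin n → Option C) (c : C) : ℝ :=
  ∑ i ∈ Finset.univ.filter (fun i => appChain i = some c), a i

/-- Processed gas of chain `c` in the reduction instance: both operators have
capacity `B`, so `Supply_c = B` for any nonempty operator set; chains without
operators contribute `0`. -/
noncomputable def chainGas {C : Type*} [DecidableEq C] {n : ℕ}
    (a : Fin n → ℝ) (appChain : Fin n → Option C)
    (opChain : Fin 2 → Option C) (B : ℝ) (c : C) : ℝ :=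
  if (Finset.univ.filter (fun o : Fin 2 => opChain o = some c)).Nonempty then
    min (chainDemand a appChain c) B
  else 0

lemma demand_nonneg {C : Type*} [DecidableEq C] {n : ℕ}
    (a : Fin n → ℝ) (ha : ∀ i, 0 < a i) (appChain : Fin n → Option C) (c : C) :
    0 ≤ chainDemand a appChain c :=
  Finset.sum_nonneg fun i _ => (ha i).le

lemma gas_le_B {C : Type*} [DecidableEq C] {n : ℕ}
    (a : Fin n → ℝ) (ha : ∀ i, 0 < a i) (appChain : Fin n → Option C)
    (opChain : Fin 2 → Option C) {B : ℝ} (hB : 0 < B) (c : C) :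
    chainGas a appChain opChain B c ≤ B := by
  unfold chainGas
  split
  · exact min_le_right _ _
  · exact hB.le

/-- Partition reduction, soundness: in the two-operator instance
(all prices `1`, operator capacities `B`, demands `a_i` with `Σ a_i = 2B`),
any feasible assignment with system utility `≥ 2B` places the two operators on
different chains, each with application demand exactly `B`; hence the `a_i`
admit a partition into two sets each summing to `B`. -/
theorem stmt17 {C : Type*} [Fintype C] [DecidableEq C] {n : ℕ}
    (a : Fin n → ℝ) (B : ℝ) (hB : 0 < B)
    (ha : ∀ i, 0 < a i) (hsum : ∑ i, a i = 2 * B)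
    (appChain : Fin n → Option C) (opChain : Fin 2 → Option C)
    (hutil : 2 * B ≤ ∑ c, chainGas a appChain opChain B c) :
    (∃ c₁ c₂ : C, c₁ ≠ c₂ ∧ opChain 0 = some c₁ ∧ opChain 1 = some c₂ ∧
      chainDemand a appChain c₁ = B ∧ chainDemand a appChain c₂ = B) ∧
      ∃ S : Finset (Fin n), ∑ i ∈ S, a i = B := by
  -- chains without operators contribute zero
  have hzero : ∀ c : C, (∀ o : Fin 2, opChain o ≠ some c) →
      chainGas a appChain opChain B c = 0 := by
    intro c hc
    unfold chainGas
    rw [if_neg]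
    rintro ⟨o, ho⟩
    exact hc o (Finset.mem_filter.mp ho).2
  -- case on where the operators are
  rcases h0 : opChain 0 with _ | c₁
  · -- operator 0 unassigned: at most one chain has an operator
    exfalso
    rcases h1 : opChain 1 with _ | c₂
    · have : ∑ c, chainGas a appChain opChain B c = 0 := by
        apply Finset.sum_eq_zero
        intro c _
        apply hzero
        intro o
        fin_cases o <;> simp [h0, h1]
      linarith
    · have hsub : ∑ c, chainGas a appChain opChain B c
          = chainGas a appChain opChain B c₂ := by
        rw [← Finset.sum_subset (Finset.subset_univ {c₂})]
        · simp
        · intro c _ hc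
          apply hzero
          intro o hoc
          fin_cases o <;> simp_all
      have := gas_le_B a ha appChain opChain hB c₂
      rw [hsub] at hutil; linarith
  rcases h1 : opChain 1 with _ | c₂
  · exfalso
    have hsub : ∑ c, chainGas a appChain opChain B c
        = chainGas a appChain opChain B c₁ := by
      rw [← Finset.sum_subset (Finset.subset_univ {c₁})]
      · simp
      · intro c _ hc
        apply hzero
        intro o hoc
        fin_cases o <;> simp_all
    have := gas_le_B a ha appChain opChain hB c₁
    rw [hsub] at hutil; linarith
  by_cases hcc : c₁ = c₂
  · -- both operators on the same chain: utility ≤ B, contradiction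
    exfalso
    subst hcc
    have hsub : ∑ c, chainGas a appChain opChain B c
        = chainGas a appChain opChain B c₁ := by
      rw [← Finset.sum_subset (Finset.subset_univ {c₁})]
      · simp
      · intro c _ hc
        apply hzero
        intro o hoc
        fin_cases o <;> simp_all
    have := gas_le_B a ha appChain opChain hB c₁
    rw [hsub] at hutil; linarith
  -- main case: different chains
  have hsub : ∑ c, chainGas a appChain opChain B c
      = chainGas a appChain opChain B c₁ + chainGas a appChain opChain B c₂ := by
    rw [← Finset.sum_subset (Finset.subset_univ {c₁, c₂})]
    · rw [Finset.sum_pair hcc]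
    · intro c _ hc
      simp only [Finset.mem_insert, Finset.mem_singleton, not_or] at hc
      apply hzero
      intro o hoc
      fin_cases o <;> simp_all
  have hg1 : chainGas a appChain opChain B c₁ = min (chainDemand a appChain c₁) B := by
    unfold chainGas
    rw [if_pos ⟨0, Finset.mem_filter.mpr ⟨Finset.mem_univ _, h0⟩⟩]
  have hg2 : chainGas a appChain opChain B c₂ = min (chainDemand a appChain c₂) B := by
    unfold chainGas
    rw [if_pos ⟨1, Finset.mem_filter.mpr ⟨Finset.mem_univ _, h1⟩⟩]
  rw [hsub, hg1, hg2] at hutil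
  have hle1 : min (chainDemand a appChain c₁) B ≤ B := min_le_right _ _
  have hle2 : min (chainDemand a appChain c₂) B ≤ B := min_le_right _ _
  have hmin1 : min (chainDemand a appChain c₁) B = B := by
    rcases min_le_iff.mp (le_refl (min (chainDemand a appChain c₁) B)) with h | h
    all_goals linarith [le_min_iff.mp (le_refl (min (chainDemand a appChain c₁) B))]
  have hd1 : B ≤ chainDemand a appChain c₁ := by
    by_contra h
    push_neg at h
    rw [min_eq_left h.le] at hmin1
    linarith
  have hd2 : B ≤ chainDemand a appChain c₂ := by
    have hmin2 : min (chainDemand a appChain c₂) B = B := by linarith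
    by_contra h
    push_neg at h
    rw [min_eq_left h.le] at hmin2
    linarith
  -- total demand bound
  have hdisj : Disjoint (Finset.univ.filter (fun i => appChain i = some c₁))
      (Finset.univ.filter (fun i => appChain i = some c₂)) := by
    rw [Finset.disjoint_left]
    intro i hi1 hi2
    rw [Finset.mem_filter] at hi1 hi2
    exact hcc (Option.some.injEq .. ▸ (hi1.2 ▸ hi2.2 : (some c₁ : Option C) = some c₂) |> Option.some_injective C)
  have htot : chainDemand a appChain c₁ + chainDemand a appChain c₂ ≤ 2 * B := by
    unfold chainDemand
    rw [← Finset.sum_union hdisj, ← hsum]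
    exact Finset.sum_le_sum_of_subset_of_nonneg (Finset.subset_univ _)
      (fun i _ _ => (ha i).le)
  have he1 : chainDemand a appChain c₁ = B := le_antisymm (by linarith) hd1
  have he2 : chainDemand a appChain c₂ = B := le_antisymm (by linarith) hd2
  exact ⟨⟨c₁, c₂, hcc, rfl, rfl, he1, he2⟩,
    ⟨Finset.univ.filter (fun i => appChain i = some c₁), he1⟩⟩
end
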